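/- Let n ≥ 2, let 0 = r_1 < r_2 < ⋯ < r_n = R be a mesh of nodes, set x_i = r_i, and define p_{ij} = √(r_{j+1}² − x_i²) − √(r_j² − x_i²) for 1 ≤ i ≤ j ≤ n−1. Let k : [0, R] → ℝ be continuously differentiable. Then for every i = 1, …, n−1 there exist points ξ_j ∈ [r_j, r_{j+1}] (j = i, …, n−1) such that ∫_{x_i}^R r·k(r)/√(r² − x_i²) dr = ∑_{j=i}^{n−1} p_{ij}·k(r_j) + ∑_{j=i}^{n−1} k′(ξ_j) · ∫_{r_j}^{r_{j+1}} r(r − r_j)/√(r² − x_i²) dr. -/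

import Mathlib

/-!
Put `a = r i`. On the cell `[r j, r (j + 1)]` write `k s = k (r j) + (s - r j) * dslope k (r j) s`.
Since `s / √(s² - a²)` is the nonnegative derivative of `√(s² - a²)`, it is integrable despite the
singularity at `s = a`, and the first term integrates to `p i j * k (r j)`. The difference quotient
`dslope k (r j)` is continuous on the cell and the weight `s (s - r j) / √(s² - a²)` is nonnegative,
so the first mean value theorem for integrals pulls it out at some `η`, and Lagrange's theorem
rewrites `dslope k (r j) η` as `k' ξ`. Summing over the cells gives the decomposition.
-/

open MeasureTheory intervalIntegral Finset

theorem continuousOn_dslope_of_differentiableAt {𝕜 E : Type*} [NontriviallyNormedField 𝕜]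
    [NormedAddCommGroup E] [NormedSpace 𝕜 E] {f : 𝕜 → E} {c : 𝕜} {s : Set 𝕜}
    (hf : ContinuousOn f s) (hc : DifferentiableAt 𝕜 f c) : ContinuousOn (dslope f c) s := by
  intro t ht
  rcases eq_or_ne t c with rfl | hne
  · exact (continuousAt_dslope_same.2 hc).continuousWithinAt
  · exact (continuousWithinAt_dslope_of_ne hne).2 (hf t ht)

theorem exists_mem_Icc_dslope_eq {f f' : ℝ → ℝ} {c x : ℝ} (hcx : c ≤ x)
    (hf : ∀ t ∈ Set.Icc c x, HasDerivAt f (f' t) t) :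
    ∃ ξ ∈ Set.Icc c x, dslope f c x = f' ξ := by
  rcases hcx.eq_or_lt with rfl | hlt
  · exact ⟨c, Set.left_mem_Icc.2 le_rfl, by
      rw [dslope_same, (hf c (Set.left_mem_Icc.2 le_rfl)).deriv]⟩
  · obtain ⟨ξ, hξ, hslope⟩ := exists_hasDerivAt_eq_slope f f' hlt
      (fun t ht => (hf t ht).continuousAt.continuousWithinAt)
      (fun t ht => hf t (Set.Ioo_subset_Icc_self ht))
    exact ⟨ξ, Set.Ioo_subset_Icc_self hξ, by rw [dslope_of_ne f hlt.ne', slope_def_field, hslope]⟩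

section AbelKernel

variable {a c d : ℝ}

theorem hasDerivAt_sqrt_sq_sub_sq {x : ℝ} (h : |a| < x) :
    HasDerivAt (fun s => √(s ^ 2 - a ^ 2)) (x / √(x ^ 2 - a ^ 2)) x := by
  have hax : a ^ 2 < x ^ 2 := sq_lt_sq' (abs_lt.1 h).1 (abs_lt.1 h).2
  convert ((hasDerivAt_pow 2 x).sub_const (a ^ 2)).sqrt (sub_pos.2 hax).ne' using 1
  field_simp
  ring

theorem intervalIntegrable_div_sqrt_sq_sub_sq (hac : |a| ≤ c) (hcd : c ≤ d) :
    IntervalIntegrable (fun s => s / √(s ^ 2 - a ^ 2)) volume c d := by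
  rw [intervalIntegrable_iff_integrableOn_Ioc_of_le hcd]
  refine integrableOn_deriv_of_nonneg (by fun_prop)
    (fun x hx => hasDerivAt_sqrt_sq_sub_sq (hac.trans_lt hx.1))
    (fun x hx => div_nonneg ?_ (Real.sqrt_nonneg _))
  linarith [abs_nonneg a, hx.1]

theorem integral_div_sqrt_sq_sub_sq (hac : |a| ≤ c) (hcd : c ≤ d) :
    ∫ s in c..d, s / √(s ^ 2 - a ^ 2) = √(d ^ 2 - a ^ 2) - √(c ^ 2 - a ^ 2) :=
  integral_eq_sub_of_hasDerivAt_of_le hcd (by fun_prop)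
    (fun x hx => hasDerivAt_sqrt_sq_sub_sq (hac.trans_lt hx.1))
    (intervalIntegrable_div_sqrt_sq_sub_sq hac hcd)

theorem intervalIntegrable_mul_div_sqrt_sq_sub_sq {g : ℝ → ℝ} (hac : |a| ≤ c) (hcd : c ≤ d)
    (hg : ContinuousOn g (Set.Icc c d)) :
    IntervalIntegrable (fun s => s * g s / √(s ^ 2 - a ^ 2)) volume c d := by
  convert (intervalIntegrable_div_sqrt_sq_sub_sq hac hcd).continuousOn_mul
    (Set.uIcc_of_le hcd ▸ hg) using 1
  ext s
  ring

theorem exists_integral_mul_div_sqrt_sq_sub_sq_eq {k k' : ℝ → ℝ} (hac : |a| ≤ c) (hcd : c ≤ d)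
    (hk : ∀ t ∈ Set.Icc c d, HasDerivAt k (k' t) t) :
    ∃ ξ ∈ Set.Icc c d, ∫ s in c..d, s * k s / √(s ^ 2 - a ^ 2) =
      (√(d ^ 2 - a ^ 2) - √(c ^ 2 - a ^ 2)) * k c
        + k' ξ * ∫ s in c..d, s * (s - c) / √(s ^ 2 - a ^ 2) := by
  have hkc : ContinuousOn k (Set.Icc c d) := fun t ht => (hk t ht).continuousAt.continuousWithinAt
  have hq : ContinuousOn (dslope k c) (Set.uIcc c d) := by
    rw [Set.uIcc_of_le hcd]
    exact continuousOn_dslope_of_differentiableAt hkc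
      (hk c (Set.left_mem_Icc.2 hcd)).differentiableAt
  have hw : IntervalIntegrable (fun s => s * (s - c) / √(s ^ 2 - a ^ 2)) volume c d :=
    intervalIntegrable_mul_div_sqrt_sq_sub_sq hac hcd (by fun_prop)
  have hw0 : ∀ s ∈ Set.uIoc c d, 0 ≤ s * (s - c) / √(s ^ 2 - a ^ 2) := by
    intro s hs
    rw [Set.uIoc_of_le hcd] at hs
    have : 0 ≤ s := (abs_nonneg a).trans (hac.trans hs.1.le)
    have : 0 ≤ s - c := by linarith [hs.1]
    positivity
  obtain ⟨η, hη, hmean⟩ := exists_eq_const_mul_intervalIntegral_of_nonneg hq hw hw0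
  rw [Set.uIcc_of_le hcd] at hη
  obtain ⟨ξ, hξ, hdslope⟩ :=
    exists_mem_Icc_dslope_eq hη.1 fun t ht => hk t ⟨ht.1, ht.2.trans hη.2⟩
  have hsplit : ∫ s in c..d, s * k s / √(s ^ 2 - a ^ 2) =
      (k c * ∫ s in c..d, s / √(s ^ 2 - a ^ 2))
        + ∫ s in c..d, dslope k c s * (s * (s - c) / √(s ^ 2 - a ^ 2)) := by
    rw [← intervalIntegral.integral_const_mul, ← intervalIntegral.integral_add
      ((intervalIntegrable_div_sqrt_sq_sub_sq hac hcd).const_mul _) (hw.continuousOn_mul hq)]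
    congr 1 with s
    have := sub_smul_dslope k c s
    rw [smul_eq_mul] at this
    linear_combination -(s / √(s ^ 2 - a ^ 2)) * this
  refine ⟨ξ, ⟨hξ.1, hξ.2.trans hη.2⟩, ?_⟩
  rw [hsplit, hmean, hdslope, integral_div_sqrt_sq_sub_sq hac hcd]
  ring

end AbelKernel

theorem abel_quadrature_error_decomposition_general
    (n : ℕ) (r : ℕ → ℝ) (hr0 : r 1 = 0)
    (hmono : ∀ j, 1 ≤ j → j < n → r j < r (j + 1))
    (p : ℕ → ℕ → ℝ)
    (hp : ∀ i j, p i j =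
      Real.sqrt ((r (j + 1)) ^ 2 - (r i) ^ 2) - Real.sqrt ((r j) ^ 2 - (r i) ^ 2))
    (k k' : ℝ → ℝ)
    (hderiv : ∀ t ∈ Set.Icc (0 : ℝ) (r n), HasDerivAt k (k' t) t) :
    ∀ i, 1 ≤ i → i < n →
      ∃ ξ : ℕ → ℝ,
        (∀ j, i ≤ j → j < n → ξ j ∈ Set.Icc (r j) (r (j + 1))) ∧
          ∫ s in (r i)..(r n), s * k s / Real.sqrt (s ^ 2 - (r i) ^ 2)
            = (∑ j ∈ Finset.Ico i n, p i j * k (r j))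
              + ∑ j ∈ Finset.Ico i n,
                  k' (ξ j) *
                    ∫ s in (r j)..(r (j + 1)),
                      s * (s - r j) / Real.sqrt (s ^ 2 - (r i) ^ 2) := by
  intro i hi hin
  have hr : MonotoneOn r (Set.Icc 1 n) := monotoneOn_of_le_succ Set.ordConnected_Icc
    fun j _ hj hj' => (hmono j hj.1 (Order.succ_le_iff.1 hj'.2)).le
  have hmesh : ∀ j ∈ Set.Ico i n, |r i| ≤ r j ∧ r j ≤ r (j + 1) ∧
      ∀ t ∈ Set.Icc (r j) (r (j + 1)), HasDerivAt k (k' t) t := by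
    intro j ⟨hij, hjn⟩
    have hri : 0 ≤ r i := hr0 ▸ hr ⟨le_rfl, by omega⟩ ⟨hi, hin.le⟩ hi
    have hrij : r i ≤ r j := hr ⟨hi, hin.le⟩ ⟨by omega, hjn.le⟩ hij
    have hrjn : r (j + 1) ≤ r n := hr ⟨by omega, hjn⟩ ⟨by omega, le_rfl⟩ hjn
    exact ⟨(abs_of_nonneg hri).trans_le hrij, (hmono j (by omega) hjn).le,
      fun t ht => hderiv t ⟨hri.trans (hrij.trans ht.1), ht.2.trans hrjn⟩⟩
  have hpiece : ∀ j ∈ Finset.Ico i n, ∃ ξ ∈ Set.Icc (r j) (r (j + 1)),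
      ∫ s in (r j)..(r (j + 1)), s * k s / √(s ^ 2 - r i ^ 2) = p i j * k (r j)
        + k' ξ * ∫ s in (r j)..(r (j + 1)), s * (s - r j) / √(s ^ 2 - r i ^ 2) := by
    intro j hj
    obtain ⟨hij, hjj, hk⟩ := hmesh j (Finset.mem_Ico.1 hj)
    rw [hp]
    exact exists_integral_mul_div_sqrt_sq_sub_sq_eq hij hjj hk
  choose! ξ hξ hξeq using hpiece
  refine ⟨ξ, fun j hij hjn => hξ j (Finset.mem_Ico.2 ⟨hij, hjn⟩), ?_⟩
  rw [← sum_integral_adjacent_intervals_Ico hin.le fun j hj =>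
    intervalIntegrable_mul_div_sqrt_sq_sub_sq (hmesh j hj).1 (hmesh j hj).2.1
      fun t ht => ((hmesh j hj).2.2 t ht).continuousAt.continuousWithinAt,
    ← Finset.sum_add_distrib]
  exact Finset.sum_congr rfl hξeq

/-- Let `n ≥ 2`, `0 = r 1 < ⋯ < r n = R` a mesh (with `x i = r i`), and
`p i j = √(r (j+1)² − r i²) − √(r j² − r i²)`.  If `k` is continuously differentiable
on `[0, r n]` (with derivative `k'`), then for every `i = 1, …, n−1` there exist
`ξ j ∈ [r j, r (j+1)]` (`j = i, …, n−1`) such that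
`∫_{r i}^{r n} s k(s)/√(s² − (r i)²) ds = ∑_{j=i}^{n−1} p i j · k (r j)
  + ∑_{j=i}^{n−1} k' (ξ j) · ∫_{r j}^{r (j+1)} s (s − r j)/√(s² − (r i)²) ds`. -/
theorem abel_quadrature_error_decomposition
    (n : ℕ) (hn : 2 ≤ n) (r : ℕ → ℝ) (hr0 : r 1 = 0)
    (hmono : ∀ j, 1 ≤ j → j < n → r j < r (j + 1))
    (p : ℕ → ℕ → ℝ)
    (hp : ∀ i j, p i j =
      Real.sqrt ((r (j + 1)) ^ 2 - (r i) ^ 2) - Real.sqrt ((r j) ^ 2 - (r i) ^ 2))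
    (k k' : ℝ → ℝ)
    (hderiv : ∀ t ∈ Set.Icc (0 : ℝ) (r n), HasDerivAt k (k' t) t)
    (hcont : ContinuousOn k' (Set.Icc (0 : ℝ) (r n))) :
    ∀ i, 1 ≤ i → i < n →
      ∃ ξ : ℕ → ℝ,
        (∀ j, i ≤ j → j < n → ξ j ∈ Set.Icc (r j) (r (j + 1))) ∧
          ∫ s in (r i)..(r n), s * k s / Real.sqrt (s ^ 2 - (r i) ^ 2)
            = (∑ j ∈ Finset.Ico i n, p i j * k (r j))
              + ∑ j ∈ Finset.Ico i n,
                  k' (ξ j) *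
                    ∫ s in (r j)..(r (j + 1)),
                      s * (s - r j) / Real.sqrt (s ^ 2 - (r i) ^ 2) :=
  abel_quadrature_error_decomposition_general n r hr0 hmono p hp k k' hderiv
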